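/- Let $F$ be a field of $\operatorname{char}(F) = 2$, $n \geq 2$, and let $\alpha_1,\dots,\alpha_{n+1} \in F^\times$ be such that $1, \alpha_1,\dots,\alpha_{n+1}$ generate over $F^2$ a subfield of degree $2^{n+1}$ in $F$ (equivalently, the monomials $\alpha_1^{e_1}\cdots\alpha_{n+1}^{e_{n+1}}$, $(e_1,\dots,e_{n+1}) \in \{0,1\}^{n+1}$, are $F^2$-linearly independent). Set $V_\varphi = \bigoplus_{(e_1,\dots,e_n) \in \{0,1\}^n \setminus \{0\}} F^2\, \alpha_1^{e_1}\cdots\alpha_n^{e_n}$ and $V_\psi = \bigoplus_{(e_1,\dots,e_{n-1},e_{n+1}) \in \{0,1\}^n \setminus \{0\}} F^2\, \alpha_1^{e_1}\cdots\alpha_{n-2}^{e_{n-2}}(\alpha_{n-1}+1)^{e_{n-1}}\alpha_{n+1}^{e_{n+1}}$, both $F^2$-subspaces of $F$ of dimension $2^n - 1$. Then $V_\varphi \cap V_\psi = W \oplus \alpha_{n-1} W$, where $W = \bigoplus_{(e_1,\dots,e_{n-2}) \in \{0,1\}^{n-2} \setminus \{0\}} F^2\, \alpha_1^{e_1}\cdots\alpha_{n-2}^{e_{n-2}}$;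 in particular $\dim_{F^2}(V_\varphi \cap V_\psi) = 2^{n-1} - 2$. -/

import Mathlib

/-- The `2^m` monomials `∏ uᵢ^{eᵢ}`, `e ∈ {0,1}^m`, are linearly independent over the
subfield `F² = {x² : x ∈ F}`; equivalently, `1, u₁, …, uₘ` generate over `F²` a subfield
of degree `2^m` of `F`. In particular the existence of such a tuple of length `m` says
exactly that `[F : F²] ≥ 2^m`. -/
def TwoIndependent (F : Type) [Field F] {m : ℕ} (u : Fin m → F) : Prop :=
  ∀ c : (Fin m → Bool) → F,
    (∑ e : Fin m → Bool, c e ^ 2 * ∏ i, if e i then u i else 1) = 0 → ∀ e, c e = 0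

/-- The subfield `F² = {x² : x ∈ F}` of a field `F` of characteristic `2`. -/
noncomputable def squaresSubfield (F : Type) [Field F] [CharP F 2] : Subfield F :=
  (frobenius F 2).fieldRange

/-- The monomial `∏ uᵢ^{eᵢ}` associated to `e ∈ {0,1}^m`. -/
noncomputable def pfMonomial (F : Type) [Field F] {m : ℕ} (u : Fin m → F)
    (e : Fin m → Bool) : F :=
  ∏ i, if e i then u i else 1

/-- The `F²`-span of the monomials `∏ uᵢ^{eᵢ}`, `e ∈ {0,1}^m ∖ {0}` — e.g. the set of
values (together with `0`) of the pure part of the bilinear Pfister form `⟨⟨u₁,…,uₘ⟩⟩`. -/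
noncomputable def pureMonomialSpan (F : Type) [Field F] [CharP F 2] {m : ℕ}
    (u : Fin m → F) : Submodule (squaresSubfield F) F :=
  Submodule.span (squaresSubfield F)
    {x : F | ∃ e : Fin m → Bool, e ≠ (fun _ => false) ∧ x = pfMonomial F u e}

/-- As `pureMonomialSpan`, with all monomials multiplied by a fixed scalar `t`. -/
noncomputable def scaledPureMonomialSpan (F : Type) [Field F] [CharP F 2] {m : ℕ}
    (t : F) (u : Fin m → F) : Submodule (squaresSubfield F) F :=
  Submodule.span (squaresSubfield F)
    {x : F | ∃ e : Fin m → Bool, e ≠ (fun _ => false) ∧ x = t * pfMonomial F u e}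

/-!
Write `u = (α₁, …, α_{n-2})`, `a₁ = α_{n-1}`, `a₂ = α_n`, `a₃ = α_{n+1}`. The monomials
`u^g a₁^{b₁} a₂^{b₂} a₃^{b₃}` are `F²`-linearly independent, and stay so when the monomial `1`
is replaced by `a₁ + 1`. For this modified family `V_φ`, `V_ψ`, `W` and `a₁W` are all spans of
subfamilies: `V_φ` of the nontrivial monomials free of `a₃`, and `V_ψ` of those free of `a₂`
other than `a₁`, since `u^g (a₁ + 1) a₃^{b₃} = u^g a₁ a₃^{b₃} + u^g a₃^{b₃}`. Spans of two
subfamilies of an independent family meet in the span of the common subfamily, here the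
generators of `W` and `a₁W`, and all dimensions become cardinalities of index sets.
-/

open Function Submodule Module

theorem LinearIndependent.span_image_inter_span_image {ι R M : Type*} [Ring R]
    [AddCommGroup M] [Module R M] {v : ι → M} (hv : LinearIndependent R v) (s t : Set ι) :
    span R (v '' s) ⊓ span R (v '' t) = span R (v '' (s ∩ t)) := by
  simp only [Finsupp.span_image_eq_map_linearCombination, Finsupp.supported_inter,
    Submodule.map_inf _ hv]

theorem LinearIndependent.finrank_span_image {ι R M : Type*} [DivisionRing R]
    [AddCommGroup M] [Module R M] [Finite ι] {v : ι → M} (hv : LinearIndependent R v)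
    (s : Set ι) : finrank R (span R (v '' s)) = s.ncard := by
  have := Fintype.ofFinite s
  rw [Set.image_eq_range, ← Nat.card_coe_set_eq, Nat.card_eq_fintype_card]
  exact finrank_span_eq_card (hv.comp _ Subtype.val_injective)

theorem LinearIndependent.update_add {ι R M : Type*} [CommRing R] [AddCommGroup M]
    [Module R M] [DecidableEq ι] {v : ι → M} (hv : LinearIndependent R v) {i j : ι}
    (hij : i ≠ j) : LinearIndependent R (Function.update v i (v i + v j)) :=
  hv.update i _ ⟨1, one_mem _, Finsupp.single i 1 + Finsupp.single j 1,
    by simp [Finsupp.single_eq_of_ne hij], by simp⟩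

theorem Set.ncard_image_compl_singleton {α β : Type*} [Finite α] {f : α → β}
    (hf : Injective f) (a : α) : (f '' {a}ᶜ).ncard = Nat.card α - 1 := by
  rw [Set.ncard_image_of_injective _ hf, Set.ncard_compl, Set.ncard_singleton]

section Monomials

variable {F : Type} [Field F] {k : ℕ}

theorem TwoIndependent.linearIndependent [CharP F 2] {u : Fin k → F}
    (hu : TwoIndependent F u) : LinearIndependent (squaresSubfield F) (pfMonomial F u) := by
  rw [Fintype.linearIndependent_iff]
  intro s hs
  choose c hc using fun e => RingHom.mem_fieldRange.mp (s e).2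
  have hc0 := hu c (by simpa [← hc, frobenius_def, pfMonomial, Subfield.smul_def] using hs)
  exact fun e => Subtype.ext (by simp [← hc, hc0 e])

theorem pfMonomial_snoc (u : Fin k → F) (a : F) (e : Fin k → Bool) (b : Bool) :
    pfMonomial F (Fin.snoc u a) (Fin.snoc e b) = pfMonomial F u e * if b then a else 1 := by
  simp [pfMonomial, Fin.prod_univ_castSucc]

variable [CharP F 2]

theorem pureMonomialSpan_eq_span_image (u : Fin k → F) :
    pureMonomialSpan F u = span (squaresSubfield F) (pfMonomial F u '' {⊥}ᶜ) := by
  simp only [pureMonomialSpan, Set.image, eq_comm (a := pfMonomial F u _)]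
  rfl

theorem scaledPureMonomialSpan_eq_span_image (t : F) (u : Fin k → F) :
    scaledPureMonomialSpan F t u =
      span (squaresSubfield F) ((fun e => t * pfMonomial F u e) '' {⊥}ᶜ) := by
  simp only [scaledPureMonomialSpan, Set.image, eq_comm (b := t * pfMonomial F u _)]
  rfl

theorem pureMonomialSpan_snoc_snoc (u : Fin k → F) (a c : F) :
    pureMonomialSpan F (Fin.snoc (Fin.snoc u a) c) = span (squaresSubfield F)
      ((fun p : (Fin k → Bool) × Bool × Bool =>
        pfMonomial F u p.1 * (if p.2.1 then a else 1) * (if p.2.2 then c else 1)) '' {⊥}ᶜ) := by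
  let j (p : (Fin k → Bool) × Bool × Bool) : Fin (k + 2) → Bool :=
    Fin.snoc (Fin.snoc p.1 p.2.1) p.2.2
  have hj : Bijective j := by
    refine ⟨fun p q h => ?_, fun e =>
      ⟨(Fin.init (Fin.init e), Fin.init e (Fin.last k), e (Fin.last (k + 1))), ?_⟩⟩
    · simpa [j, Fin.snoc_inj, Prod.ext_iff, and_assoc] using h
    · simp [j, Fin.snoc_init_self]
  have hj_bot : j ⊥ = ⊥ := by
    conv_rhs =>
      rw [← Fin.snoc_init_self (⊥ : Fin (k + 2) → Bool), ← Fin.snoc_init_self (Fin.init _)]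
    rfl
  rw [pureMonomialSpan_eq_span_image, ← hj_bot, ← Set.image_singleton,
    ← Set.image_compl_eq hj, Set.image_image]
  simp [j, pfMonomial_snoc, mul_assoc]

end Monomials

section Blocks

variable {F : Type} [Field F] {m : ℕ} (u : Fin m → F) (a₁ a₂ a₃ : F)

noncomputable def blockMonomial (i : (Fin m → Bool) × Bool × Bool × Bool) : F :=
  pfMonomial F u i.1 * (if i.2.1 then a₁ else 1) * (if i.2.2.1 then a₂ else 1) *
    (if i.2.2.2 then a₃ else 1)

theorem TwoIndependent.linearIndependent_blockMonomial [CharP F 2]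
    (h : TwoIndependent F (Fin.snoc (Fin.snoc (Fin.snoc u a₁) a₂) a₃)) :
    LinearIndependent (squaresSubfield F) (blockMonomial u a₁ a₂ a₃) := by
  have hinj : Injective fun i : (Fin m → Bool) × Bool × Bool × Bool =>
      (Fin.snoc (Fin.snoc (Fin.snoc i.1 i.2.1) i.2.2.1) i.2.2.2 : Fin (m + 3) → Bool) := by
    intro i j hij
    simpa [Fin.snoc_inj, Prod.ext_iff, and_assoc] using hij
  convert h.linearIndependent.comp _ hinj
  ext
  simp [blockMonomial, pfMonomial_snoc]

noncomputable def adaptedMonomial : (Fin m → Bool) × Bool × Bool × Bool → F :=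
  Function.update (blockMonomial u a₁ a₂ a₃) ⊥ (a₁ + 1)

theorem linearIndependent_adaptedMonomial [CharP F 2]
    (hb : LinearIndependent (squaresSubfield F) (blockMonomial u a₁ a₂ a₃)) :
    LinearIndependent (squaresSubfield F) (adaptedMonomial u a₁ a₂ a₃) := by
  have h := hb.update_add (i := ⊥) (j := (⊥, true, false, false)) (by simp [Prod.ext_iff])
  rwa [show blockMonomial u a₁ a₂ a₃ ⊥ + blockMonomial u a₁ a₂ a₃ (⊥, true, false, false) =
    a₁ + 1 by simp [blockMonomial, pfMonomial, add_comm]] at h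

theorem adaptedMonomial_bot : adaptedMonomial u a₁ a₂ a₃ ⊥ = a₁ + 1 :=
  Function.update_self _ _ _

theorem adaptedMonomial_of_ne {i} (hi : i ≠ ⊥) :
    adaptedMonomial u a₁ a₂ a₃ i = blockMonomial u a₁ a₂ a₃ i :=
  Function.update_of_ne hi _ _

def phiIndices (m : ℕ) : Set ((Fin m → Bool) × Bool × Bool × Bool) :=
  (fun p : (Fin m → Bool) × Bool × Bool => (p.1, p.2.1, p.2.2, false)) '' {⊥}ᶜ

/-- The index `⊥` now carries `a₁ + 1`, while `a₁` itself is not in `V_ψ`. -/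
def psiIndices (m : ℕ) : Set ((Fin m → Bool) × Bool × Bool × Bool) :=
  (fun p : (Fin m → Bool) × Bool × Bool => (p.1, p.2.1, false, p.2.2)) '' {(⊥, true, false)}ᶜ

def baseIndices (m : ℕ) (b : Bool) : Set ((Fin m → Bool) × Bool × Bool × Bool) :=
  (fun g : Fin m → Bool => (g, b, false, false)) '' {⊥}ᶜ

theorem phiIndices_inter_psiIndices :
    phiIndices m ∩ psiIndices m = baseIndices m false ∪ baseIndices m true := by
  ext ⟨g, b₁, b₂, b₃⟩
  cases b₁ <;> cases b₂ <;> cases b₃ <;> simp [phiIndices, psiIndices, baseIndices, Prod.ext_iff]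

theorem disjoint_baseIndices : Disjoint (baseIndices m false) (baseIndices m true) := by
  simp [baseIndices, Set.disjoint_left]

theorem ncard_phiIndices : (phiIndices m).ncard = 2 ^ (m + 2) - 1 := by
  rw [phiIndices, Set.ncard_image_compl_singleton]
  · simp [pow_succ, mul_assoc]
  · intro p q h
    simpa [Prod.ext_iff] using h

theorem ncard_psiIndices : (psiIndices m).ncard = 2 ^ (m + 2) - 1 := by
  rw [psiIndices, Set.ncard_image_compl_singleton]
  · simp [pow_succ, mul_assoc]
  · intro p q h
    simpa [Prod.ext_iff] using h

theorem ncard_baseIndices (b : Bool) : (baseIndices m b).ncard = 2 ^ m - 1 := by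
  rw [baseIndices, Set.ncard_image_compl_singleton]
  · simp
  · intro p q h
    simpa [Prod.ext_iff] using h

variable [CharP F 2]

theorem pureMonomialSpan_eq_span_baseIndices :
    pureMonomialSpan F u =
      span (squaresSubfield F) (adaptedMonomial u a₁ a₂ a₃ '' baseIndices m false) := by
  rw [pureMonomialSpan_eq_span_image, baseIndices, Set.image_image]
  refine congrArg _ (Set.image_congr fun g hg => ?_)
  rw [adaptedMonomial_of_ne _ _ _ _ (by simpa [Prod.ext_iff] using hg)]
  simp [blockMonomial]

theorem scaledPureMonomialSpan_eq_span_baseIndices :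
    scaledPureMonomialSpan F a₁ u =
      span (squaresSubfield F) (adaptedMonomial u a₁ a₂ a₃ '' baseIndices m true) := by
  rw [scaledPureMonomialSpan_eq_span_image, baseIndices, Set.image_image]
  refine congrArg _ (Set.image_congr fun g _ => ?_)
  rw [adaptedMonomial_of_ne _ _ _ _ (by simp [Prod.ext_iff])]
  simp [blockMonomial, mul_comm]

theorem pureMonomialSpan_eq_span_phiIndices :
    pureMonomialSpan F (Fin.snoc (Fin.snoc u a₁) a₂) =
      span (squaresSubfield F) (adaptedMonomial u a₁ a₂ a₃ '' phiIndices m) := by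
  rw [pureMonomialSpan_snoc_snoc, phiIndices, Set.image_image]
  refine congrArg _ (Set.image_congr fun p hp => ?_)
  rw [adaptedMonomial_of_ne _ _ _ _ (by simpa [Prod.ext_iff] using hp)]
  simp [blockMonomial]

end Blocks

section Psi

variable {F : Type} [Field F] {m : ℕ} (u : Fin m → F) (a₁ a₂ a₃ : F)

noncomputable def psiMonomial (p : (Fin m → Bool) × Bool × Bool) : F :=
  pfMonomial F u p.1 * (if p.2.1 then a₁ + 1 else 1) * (if p.2.2 then a₃ else 1)

variable {g : Fin m → Bool} {b₃ : Bool}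

theorem adaptedMonomial_psi (b₁ : Bool) (h : (g, b₃) ≠ ⊥) :
    adaptedMonomial u a₁ a₂ a₃ (g, b₁, false, b₃) =
      pfMonomial F u g * (if b₁ then a₁ else 1) * (if b₃ then a₃ else 1) := by
  rw [adaptedMonomial_of_ne _ _ _ _ (by simp [Prod.ext_iff] at h ⊢; tauto)]
  simp [blockMonomial]

theorem psiMonomial_false (h : (g, b₃) ≠ ⊥) :
    psiMonomial u a₁ a₃ (g, false, b₃) = adaptedMonomial u a₁ a₂ a₃ (g, false, false, b₃) := by
  simp [psiMonomial, adaptedMonomial_psi _ _ _ _ _ h]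

theorem psiMonomial_true (h : (g, b₃) ≠ ⊥) :
    psiMonomial u a₁ a₃ (g, true, b₃) =
      adaptedMonomial u a₁ a₂ a₃ (g, true, false, b₃) +
        adaptedMonomial u a₁ a₂ a₃ (g, false, false, b₃) := by
  cases b₃ <;> simp [psiMonomial, adaptedMonomial_psi _ _ _ _ _ h] <;> ring

theorem psiMonomial_bot_true :
    psiMonomial u a₁ a₃ (⊥, true, false) = adaptedMonomial u a₁ a₂ a₃ ⊥ := by
  simp [psiMonomial, adaptedMonomial_bot, pfMonomial]

variable [CharP F 2]

theorem psiMonomial_mem_span {p} (hp : p ≠ ⊥) :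
    psiMonomial u a₁ a₃ p ∈
      span (squaresSubfield F) (adaptedMonomial u a₁ a₂ a₃ '' psiIndices m) := by
  have mem : ∀ q ≠ ((⊥ : Fin m → Bool), true, false),
      adaptedMonomial u a₁ a₂ a₃ (q.1, q.2.1, false, q.2.2) ∈
        span (squaresSubfield F) (adaptedMonomial u a₁ a₂ a₃ '' psiIndices m) :=
    fun q hq => subset_span ⟨_, ⟨q, hq, rfl⟩, rfl⟩
  obtain ⟨g, b₁, b₃⟩ := p
  by_cases h : (g, b₃) = ⊥
  · obtain ⟨rfl, rfl⟩ : g = ⊥ ∧ b₃ = false := by simpa [Prod.ext_iff] using h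
    obtain rfl : b₁ = true := by simpa [Prod.ext_iff] using hp
    rw [psiMonomial_bot_true u a₁ a₂ a₃]
    exact mem ⊥ (by simp [Prod.ext_iff])
  · have mem₀ := mem (g, false, b₃) (by simp [Prod.ext_iff])
    cases b₁
    · rwa [psiMonomial_false u a₁ a₂ a₃ h]
    · rw [psiMonomial_true u a₁ a₂ a₃ h]
      exact add_mem (mem (g, true, b₃) (by simp [Prod.ext_iff] at h ⊢; tauto)) mem₀

theorem adaptedMonomial_mem_span {i} (hi : i ∈ psiIndices m) :
    adaptedMonomial u a₁ a₂ a₃ i ∈ span (squaresSubfield F) (psiMonomial u a₁ a₃ '' {⊥}ᶜ) := by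
  have mem : ∀ p ≠ ⊥,
      psiMonomial u a₁ a₃ p ∈ span (squaresSubfield F) (psiMonomial u a₁ a₃ '' {⊥}ᶜ) :=
    fun p hp => subset_span ⟨p, hp, rfl⟩
  obtain ⟨⟨g, b₁, b₃⟩, hp, rfl⟩ := hi
  dsimp only
  by_cases h : (g, b₃) = ⊥
  · obtain ⟨rfl, rfl⟩ : g = ⊥ ∧ b₃ = false := by simpa [Prod.ext_iff] using h
    obtain rfl : b₁ = false := by simpa [Prod.ext_iff] using hp
    rw [show ((⊥ : Fin m → Bool), false, false, false) = ⊥ from rfl,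
      ← psiMonomial_bot_true u a₁ a₂ a₃]
    exact mem _ (by simp [Prod.ext_iff])
  · have hgb : (g, false, b₃) ≠ ⊥ := by simp [Prod.ext_iff] at h ⊢; tauto
    cases b₁
    · rw [← psiMonomial_false u a₁ a₂ a₃ h]
      exact mem _ hgb
    · have : adaptedMonomial u a₁ a₂ a₃ (g, true, false, b₃) =
          psiMonomial u a₁ a₃ (g, true, b₃) + psiMonomial u a₁ a₃ (g, false, b₃) := by
        rw [psiMonomial_true u a₁ a₂ a₃ h, psiMonomial_false u a₁ a₂ a₃ h, add_assoc,
          CharTwo.add_self_eq_zero, add_zero]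
      rw [this]
      exact add_mem (mem _ (by simp [Prod.ext_iff])) (mem _ hgb)

theorem pureMonomialSpan_eq_span_psiIndices :
    pureMonomialSpan F (Fin.snoc (Fin.snoc u (a₁ + 1)) a₃) =
      span (squaresSubfield F) (adaptedMonomial u a₁ a₂ a₃ '' psiIndices m) := by
  rw [pureMonomialSpan_snoc_snoc]
  exact span_eq_span (Set.image_subset_iff.mpr fun _ hp => psiMonomial_mem_span u a₁ a₂ a₃ hp)
    (Set.image_subset_iff.mpr fun _ hi => adaptedMonomial_mem_span u a₁ a₂ a₃ hi)

end Psi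

section Main

variable {F : Type} [Field F] [CharP F 2] {m : ℕ} {u : Fin m → F} {a₁ a₂ a₃ : F}

theorem finrank_pureMonomialSpan_phi
    (hb : LinearIndependent (squaresSubfield F) (blockMonomial u a₁ a₂ a₃)) :
    finrank (squaresSubfield F) (pureMonomialSpan F (Fin.snoc (Fin.snoc u a₁) a₂)) =
      2 ^ (m + 2) - 1 := by
  rw [pureMonomialSpan_eq_span_phiIndices u a₁ a₂ a₃,
    (linearIndependent_adaptedMonomial u a₁ a₂ a₃ hb).finrank_span_image, ncard_phiIndices]

theorem finrank_pureMonomialSpan_psi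
    (hb : LinearIndependent (squaresSubfield F) (blockMonomial u a₁ a₂ a₃)) :
    finrank (squaresSubfield F) (pureMonomialSpan F (Fin.snoc (Fin.snoc u (a₁ + 1)) a₃)) =
      2 ^ (m + 2) - 1 := by
  rw [pureMonomialSpan_eq_span_psiIndices u a₁ a₂ a₃,
    (linearIndependent_adaptedMonomial u a₁ a₂ a₃ hb).finrank_span_image, ncard_psiIndices]

theorem pureMonomialSpan_phi_inf_psi
    (hb : LinearIndependent (squaresSubfield F) (blockMonomial u a₁ a₂ a₃)) :
    pureMonomialSpan F (Fin.snoc (Fin.snoc u a₁) a₂) ⊓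
        pureMonomialSpan F (Fin.snoc (Fin.snoc u (a₁ + 1)) a₃) =
      pureMonomialSpan F u ⊔ scaledPureMonomialSpan F a₁ u := by
  rw [pureMonomialSpan_eq_span_phiIndices u a₁ a₂ a₃,
    pureMonomialSpan_eq_span_psiIndices u a₁ a₂ a₃,
    pureMonomialSpan_eq_span_baseIndices u a₁ a₂ a₃,
    scaledPureMonomialSpan_eq_span_baseIndices u a₁ a₂ a₃,
    (linearIndependent_adaptedMonomial u a₁ a₂ a₃ hb).span_image_inter_span_image,
    phiIndices_inter_psiIndices, Set.image_union, span_union]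

theorem disjoint_pureMonomialSpan_scaledPureMonomialSpan
    (hb : LinearIndependent (squaresSubfield F) (blockMonomial u a₁ a₂ a₃)) :
    Disjoint (pureMonomialSpan F u) (scaledPureMonomialSpan F a₁ u) := by
  rw [pureMonomialSpan_eq_span_baseIndices u a₁ a₂ a₃,
    scaledPureMonomialSpan_eq_span_baseIndices u a₁ a₂ a₃]
  exact (linearIndependent_adaptedMonomial u a₁ a₂ a₃ hb).disjoint_span_image disjoint_baseIndices

theorem finrank_pureMonomialSpan_phi_inf_psi
    (hb : LinearIndependent (squaresSubfield F) (blockMonomial u a₁ a₂ a₃)) :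
    finrank (squaresSubfield F) ↥(pureMonomialSpan F (Fin.snoc (Fin.snoc u a₁) a₂) ⊓
        pureMonomialSpan F (Fin.snoc (Fin.snoc u (a₁ + 1)) a₃)) = 2 ^ (m + 1) - 2 := by
  rw [pureMonomialSpan_phi_inf_psi hb, pureMonomialSpan_eq_span_baseIndices u a₁ a₂ a₃,
    scaledPureMonomialSpan_eq_span_baseIndices u a₁ a₂ a₃, ← span_union, ← Set.image_union,
    (linearIndependent_adaptedMonomial u a₁ a₂ a₃ hb).finrank_span_image,
    Set.ncard_union_eq disjoint_baseIndices, ncard_baseIndices, ncard_baseIndices, pow_succ]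
  have := Nat.one_le_two_pow (n := m)
  omega

end Main

/-- Let `F` be a field of characteristic `2`, `n = m+2 ≥ 2`, and
`α₁,…,α_{n+1} ∈ F` such that the monomials `∏ αᵢ^{eᵢ}`, `e ∈ {0,1}^{n+1}`, are
`F²`-linearly independent. Let `V_φ` be the `F²`-span of the nontrivial monomials in
`α₁,…,αₙ` (the value set of the pure part of `φ = ⟨⟨α₁,…,αₙ⟩⟩`), and `V_ψ` the `F²`-span
of the nontrivial monomials in `α₁,…,α_{n-2}, α_{n-1}+1, α_{n+1}` (for
`ψ = ⟨⟨α₁,…,α_{n-2},α_{n-1}+1,α_{n+1}⟩⟩`); both have `F²`-dimension `2ⁿ - 1`. Then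
`V_φ ∩ V_ψ = W ⊕ α_{n-1}W` where `W` is the `F²`-span of the nontrivial monomials in
`α₁,…,α_{n-2}`; in particular `dim_{F²}(V_φ ∩ V_ψ) = 2^{n-1} - 2`. -/
theorem pfister_value_spaces_intersection (F : Type) [Field F] [CharP F 2] (m : ℕ)
    (α : Fin (m + 3) → F) (hα : TwoIndependent F α) :
    Module.finrank (squaresSubfield F)
      ↥(pureMonomialSpan F (fun i : Fin (m + 2) => α (Fin.castLE (by omega) i)))
        = 2 ^ (m + 2) - 1 ∧
    Module.finrank (squaresSubfield F)
      ↥(pureMonomialSpan F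
        (Fin.snoc (Fin.snoc (fun i : Fin m => α (Fin.castLE (by omega) i))
          (α ⟨m, by omega⟩ + 1)) (α ⟨m + 2, by omega⟩)))
        = 2 ^ (m + 2) - 1 ∧
    (pureMonomialSpan F (fun i : Fin (m + 2) => α (Fin.castLE (by omega) i)) ⊓
      pureMonomialSpan F
        (Fin.snoc (Fin.snoc (fun i : Fin m => α (Fin.castLE (by omega) i))
          (α ⟨m, by omega⟩ + 1)) (α ⟨m + 2, by omega⟩)))
      = (pureMonomialSpan F (fun i : Fin m => α (Fin.castLE (by omega) i)) ⊔
         scaledPureMonomialSpan F (α ⟨m, by omega⟩)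
           (fun i : Fin m => α (Fin.castLE (by omega) i))) ∧
    Disjoint (pureMonomialSpan F (fun i : Fin m => α (Fin.castLE (by omega) i)))
      (scaledPureMonomialSpan F (α ⟨m, by omega⟩)
        (fun i : Fin m => α (Fin.castLE (by omega) i))) ∧
    Module.finrank (squaresSubfield F)
      ↥(pureMonomialSpan F (fun i : Fin (m + 2) => α (Fin.castLE (by omega) i)) ⊓
       pureMonomialSpan F
        (Fin.snoc (Fin.snoc (fun i : Fin m => α (Fin.castLE (by omega) i))
          (α ⟨m, by omega⟩ + 1)) (α ⟨m + 2, by omega⟩)))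
        = 2 ^ (m + 1) - 2 := by
  have hφ : (fun i : Fin (m + 2) => α (Fin.castLE (by omega) i)) =
      Fin.snoc (Fin.snoc (fun i : Fin m => α (Fin.castLE (by omega) i)) (α ⟨m, by omega⟩))
        (α ⟨m + 1, by omega⟩) := by
    conv_lhs => rw [← Fin.snoc_init_self (fun i : Fin (m + 2) => α (Fin.castLE (by omega) i)),
      ← Fin.snoc_init_self (Fin.init _)]
    rfl
  have hα' : α =
      Fin.snoc (fun i : Fin (m + 2) => α (Fin.castLE (by omega) i)) (α ⟨m + 2, by omega⟩) :=
    (Fin.snoc_init_self α).symm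
  rw [hα', hφ] at hα
  have hb := hα.linearIndependent_blockMonomial
  rw [hφ]
  exact ⟨finrank_pureMonomialSpan_phi hb, finrank_pureMonomialSpan_psi hb,
    pureMonomialSpan_phi_inf_psi hb, disjoint_pureMonomialSpan_scaledPureMonomialSpan hb,
    finrank_pureMonomialSpan_phi_inf_psi hb⟩
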